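/- For every a ∈ ℝ^6 with all coordinates nonzero, P(|a_1ε_1 + ... + a_6ε_6| > ‖a‖) ≥ 3/16, and equality holds for a = (2,1,1,1,1,1); hence G_6' = 3/16. -/

import Mathlib

open Finset
open scoped Classical

/-- sign of a Boolean: `true ↦ 1`, `false ↦ -1` (a Rademacher value). -/
noncomputable def rsign (b : Bool) : ℝ := if b then 1 else -1

/-- Probability of an event under the uniform distribution on `{-1,1}^n`. -/
noncomputable def prob (n : ℕ) (E : (Fin n → Bool) → Prop) : ℝ :=
  ((Finset.univ.filter fun s => E s).card : ℝ) / 2 ^ n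


lemma vec6_five {α : Type*} (x0 x1 x2 x3 x4 x5 : α) : ![x0,x1,x2,x3,x4,x5] 5 = x5 := rfl

lemma sqrt_lt_abs {σ x : ℝ} (hσ : 0 ≤ σ) (h : σ < x ^ 2) : Real.sqrt σ < |x| := by
  have hx : 0 < |x| := by
    rcases eq_or_ne x 0 with rfl | hne
    · simp at h; nlinarith
    · exact abs_pos.2 hne
  rw [Real.sqrt_lt' hx, sq_abs]; exact h

set_option maxHeartbeats 2000000 in
lemma core (b : Fin 6 → ℝ) (hpos : ∀ i, 0 < b i) (hmono : ∀ i j : Fin 6, i ≤ j → b j ≤ b i) :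
    12 ≤ (Finset.univ.filter fun s : Fin 6 → Bool =>
      |∑ i, b i * rsign (s i)| > Real.sqrt (∑ i, (b i) ^ 2)).card := by
  have h6 : 0 < b 5 := hpos 5
  have h56 : b 5 ≤ b 4 := hmono 4 5 (by decide)
  have h45 : b 4 ≤ b 3 := hmono 3 4 (by decide)
  have h34 : b 3 ≤ b 2 := hmono 2 3 (by decide)
  have h23 : b 2 ≤ b 1 := hmono 1 2 (by decide)
  have h12 : b 1 ≤ b 0 := hmono 0 1 (by decide)
  have hp0 : (0:ℝ) < b 0 := hpos 0
  have hp1 : (0:ℝ) < b 1 := hpos 1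
  have hp2 : (0:ℝ) < b 2 := hpos 2
  have hp3 : (0:ℝ) < b 3 := hpos 3
  have hp4 : (0:ℝ) < b 4 := hpos 4
  have hp5 : (0:ℝ) < b 5 := hpos 5
  have m00 : (0:ℝ) < b 0 * b 0 := mul_pos hp0 hp0
  have m01 : (0:ℝ) < b 0 * b 1 := mul_pos hp0 hp1
  have m02 : (0:ℝ) < b 0 * b 2 := mul_pos hp0 hp2
  have m03 : (0:ℝ) < b 0 * b 3 := mul_pos hp0 hp3
  have m04 : (0:ℝ) < b 0 * b 4 := mul_pos hp0 hp4
  have m05 : (0:ℝ) < b 0 * b 5 := mul_pos hp0 hp5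
  have m11 : (0:ℝ) < b 1 * b 1 := mul_pos hp1 hp1
  have m12 : (0:ℝ) < b 1 * b 2 := mul_pos hp1 hp2
  have m13 : (0:ℝ) < b 1 * b 3 := mul_pos hp1 hp3
  have m14 : (0:ℝ) < b 1 * b 4 := mul_pos hp1 hp4
  have m15 : (0:ℝ) < b 1 * b 5 := mul_pos hp1 hp5
  have m22 : (0:ℝ) < b 2 * b 2 := mul_pos hp2 hp2
  have m23 : (0:ℝ) < b 2 * b 3 := mul_pos hp2 hp3
  have m24 : (0:ℝ) < b 2 * b 4 := mul_pos hp2 hp4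
  have m25 : (0:ℝ) < b 2 * b 5 := mul_pos hp2 hp5
  have m33 : (0:ℝ) < b 3 * b 3 := mul_pos hp3 hp3
  have m34 : (0:ℝ) < b 3 * b 4 := mul_pos hp3 hp4
  have m35 : (0:ℝ) < b 3 * b 5 := mul_pos hp3 hp5
  have m44 : (0:ℝ) < b 4 * b 4 := mul_pos hp4 hp4
  have m45 : (0:ℝ) < b 4 * b 5 := mul_pos hp4 hp5
  have m55 : (0:ℝ) < b 5 * b 5 := mul_pos hp5 hp5
  have d0_01 : (0:ℝ) ≤ b 0 * (b 0 - b 1) := mul_nonneg (le_of_lt hp0) (sub_nonneg.2 h12)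
  have d0_12 : (0:ℝ) ≤ b 0 * (b 1 - b 2) := mul_nonneg (le_of_lt hp0) (sub_nonneg.2 h23)
  have d0_23 : (0:ℝ) ≤ b 0 * (b 2 - b 3) := mul_nonneg (le_of_lt hp0) (sub_nonneg.2 h34)
  have d0_34 : (0:ℝ) ≤ b 0 * (b 3 - b 4) := mul_nonneg (le_of_lt hp0) (sub_nonneg.2 h45)
  have d0_45 : (0:ℝ) ≤ b 0 * (b 4 - b 5) := mul_nonneg (le_of_lt hp0) (sub_nonneg.2 h56)
  have d1_01 : (0:ℝ) ≤ b 1 * (b 0 - b 1) := mul_nonneg (le_of_lt hp1) (sub_nonneg.2 h12)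
  have d1_12 : (0:ℝ) ≤ b 1 * (b 1 - b 2) := mul_nonneg (le_of_lt hp1) (sub_nonneg.2 h23)
  have d1_23 : (0:ℝ) ≤ b 1 * (b 2 - b 3) := mul_nonneg (le_of_lt hp1) (sub_nonneg.2 h34)
  have d1_34 : (0:ℝ) ≤ b 1 * (b 3 - b 4) := mul_nonneg (le_of_lt hp1) (sub_nonneg.2 h45)
  have d1_45 : (0:ℝ) ≤ b 1 * (b 4 - b 5) := mul_nonneg (le_of_lt hp1) (sub_nonneg.2 h56)
  have d2_01 : (0:ℝ) ≤ b 2 * (b 0 - b 1) := mul_nonneg (le_of_lt hp2) (sub_nonneg.2 h12)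
  have d2_12 : (0:ℝ) ≤ b 2 * (b 1 - b 2) := mul_nonneg (le_of_lt hp2) (sub_nonneg.2 h23)
  have d2_23 : (0:ℝ) ≤ b 2 * (b 2 - b 3) := mul_nonneg (le_of_lt hp2) (sub_nonneg.2 h34)
  have d2_34 : (0:ℝ) ≤ b 2 * (b 3 - b 4) := mul_nonneg (le_of_lt hp2) (sub_nonneg.2 h45)
  have d2_45 : (0:ℝ) ≤ b 2 * (b 4 - b 5) := mul_nonneg (le_of_lt hp2) (sub_nonneg.2 h56)
  have d3_01 : (0:ℝ) ≤ b 3 * (b 0 - b 1) := mul_nonneg (le_of_lt hp3) (sub_nonneg.2 h12)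
  have d3_12 : (0:ℝ) ≤ b 3 * (b 1 - b 2) := mul_nonneg (le_of_lt hp3) (sub_nonneg.2 h23)
  have d3_23 : (0:ℝ) ≤ b 3 * (b 2 - b 3) := mul_nonneg (le_of_lt hp3) (sub_nonneg.2 h34)
  have d3_34 : (0:ℝ) ≤ b 3 * (b 3 - b 4) := mul_nonneg (le_of_lt hp3) (sub_nonneg.2 h45)
  have d3_45 : (0:ℝ) ≤ b 3 * (b 4 - b 5) := mul_nonneg (le_of_lt hp3) (sub_nonneg.2 h56)
  have d4_01 : (0:ℝ) ≤ b 4 * (b 0 - b 1) := mul_nonneg (le_of_lt hp4) (sub_nonneg.2 h12)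
  have d4_12 : (0:ℝ) ≤ b 4 * (b 1 - b 2) := mul_nonneg (le_of_lt hp4) (sub_nonneg.2 h23)
  have d4_23 : (0:ℝ) ≤ b 4 * (b 2 - b 3) := mul_nonneg (le_of_lt hp4) (sub_nonneg.2 h34)
  have d4_34 : (0:ℝ) ≤ b 4 * (b 3 - b 4) := mul_nonneg (le_of_lt hp4) (sub_nonneg.2 h45)
  have d4_45 : (0:ℝ) ≤ b 4 * (b 4 - b 5) := mul_nonneg (le_of_lt hp4) (sub_nonneg.2 h56)
  have d5_01 : (0:ℝ) ≤ b 5 * (b 0 - b 1) := mul_nonneg (le_of_lt hp5) (sub_nonneg.2 h12)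
  have d5_12 : (0:ℝ) ≤ b 5 * (b 1 - b 2) := mul_nonneg (le_of_lt hp5) (sub_nonneg.2 h23)
  have d5_23 : (0:ℝ) ≤ b 5 * (b 2 - b 3) := mul_nonneg (le_of_lt hp5) (sub_nonneg.2 h34)
  have d5_34 : (0:ℝ) ≤ b 5 * (b 3 - b 4) := mul_nonneg (le_of_lt hp5) (sub_nonneg.2 h45)
  have d5_45 : (0:ℝ) ≤ b 5 * (b 4 - b 5) := mul_nonneg (le_of_lt hp5) (sub_nonneg.2 h56)

  have hσ : (∑ i, (b i) ^ 2) = b 0^2 + b 1^2 + b 2^2 + b 3^2 + b 4^2 + b 5^2 :=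
    Fin.sum_univ_six _
  have hσ0 : 0 ≤ ∑ i, (b i) ^ 2 := by rw [hσ]; positivity
  have hmem : ∀ v : Fin 6 → Bool,
      (∑ i, (b i) ^ 2) < (∑ i, b i * rsign (v i)) ^ 2 →
      v ∈ Finset.univ.filter fun s : Fin 6 → Bool =>
        |∑ i, b i * rsign (s i)| > Real.sqrt (∑ i, (b i) ^ 2) := fun v hv =>
    Finset.mem_filter.2 ⟨Finset.mem_univ _, sqrt_lt_abs hσ0 hv⟩
  have hmem2 : ∀ v : Fin 6 → Bool,
      (∑ i, (b i) ^ 2) < (b 0 * rsign (v 0) + b 1 * rsign (v 1) + b 2 * rsign (v 2) +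
        b 3 * rsign (v 3) + b 4 * rsign (v 4) + b 5 * rsign (v 5)) ^ 2 →
      v ∈ Finset.univ.filter fun s : Fin 6 → Bool =>
        |∑ i, b i * rsign (s i)| > Real.sqrt (∑ i, (b i) ^ 2) := by
    intro v hv
    refine hmem v ?_
    have e := Fin.sum_univ_six (fun i => b i * rsign (v i))
    rw [e]
    exact hv
  have P0 : (∑ i, (b i) ^ 2) < (b 0 + b 1 + b 2 + b 3 + b 4 + b 5)^2 := by
    rw [hσ]; linarith
  have P3 : (∑ i, (b i) ^ 2) < (b 0 + b 1 + b 2 - b 3 + b 4 + b 5)^2 := by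
    rw [hσ]
    linarith
  have P4 : (∑ i, (b i) ^ 2) < (b 0 + b 1 + b 2 + b 3 - b 4 + b 5)^2 := by
    rw [hσ] at P3 ⊢
    linarith
  have P5 : (∑ i, (b i) ^ 2) < (b 0 + b 1 + b 2 + b 3 + b 4 - b 5)^2 := by
    rw [hσ] at P4 ⊢
    linarith
  by_cases hc1 : (∑ i, (b i) ^ 2) < (b 0 - b 1 + b 2 + b 3 + b 4 + b 5)^2
  · have P1 := hc1
    have P2 : (∑ i, (b i) ^ 2) < (b 0 + b 1 - b 2 + b 3 + b 4 + b 5)^2 := by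
      rw [hσ] at P1 ⊢
      linarith
    refine le_trans (le_of_eq (by decide : ({![true,true,true,true,true,true], ![true,false,true,true,true,true], ![true,true,false,true,true,true], ![true,true,true,false,true,true], ![true,true,true,true,false,true], ![true,true,true,true,true,false], ![false,false,false,false,false,false], ![false,true,false,false,false,false], ![false,false,true,false,false,false], ![false,false,false,true,false,false], ![false,false,false,false,true,false], ![false,false,false,false,false,true]} : Finset (Fin 6 → Bool)).card = 12).symm) (Finset.card_le_card ?_)
    intro v hv
    simp only [Finset.mem_insert, Finset.mem_singleton] at hv
    rcases hv with rfl | rfl | rfl | rfl | rfl | rfl | rfl | rfl | rfl | rfl | rfl | rfl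
    · apply hmem2
      show (∑ i, (b i) ^ 2) < (b 0 * 1 + b 1 * 1 + b 2 * 1 + b 3 * 1 + b 4 * 1 + b 5 * 1) ^ 2
      exact lt_of_lt_of_eq P0 (by ring)
    · apply hmem2
      show (∑ i, (b i) ^ 2) < (b 0 * 1 + b 1 * -1 + b 2 * 1 + b 3 * 1 + b 4 * 1 + b 5 * 1) ^ 2
      exact lt_of_lt_of_eq P1 (by ring)
    · apply hmem2
      show (∑ i, (b i) ^ 2) < (b 0 * 1 + b 1 * 1 + b 2 * -1 + b 3 * 1 + b 4 * 1 + b 5 * 1) ^ 2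
      exact lt_of_lt_of_eq P2 (by ring)
    · apply hmem2
      show (∑ i, (b i) ^ 2) < (b 0 * 1 + b 1 * 1 + b 2 * 1 + b 3 * -1 + b 4 * 1 + b 5 * 1) ^ 2
      exact lt_of_lt_of_eq P3 (by ring)
    · apply hmem2
      show (∑ i, (b i) ^ 2) < (b 0 * 1 + b 1 * 1 + b 2 * 1 + b 3 * 1 + b 4 * -1 + b 5 * 1) ^ 2
      exact lt_of_lt_of_eq P4 (by ring)
    · apply hmem2
      show (∑ i, (b i) ^ 2) < (b 0 * 1 + b 1 * 1 + b 2 * 1 + b 3 * 1 + b 4 * 1 + b 5 * -1) ^ 2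
      exact lt_of_lt_of_eq P5 (by ring)
    · apply hmem2
      show (∑ i, (b i) ^ 2) < (b 0 * -1 + b 1 * -1 + b 2 * -1 + b 3 * -1 + b 4 * -1 + b 5 * -1) ^ 2
      exact lt_of_lt_of_eq P0 (by ring)
    · apply hmem2
      show (∑ i, (b i) ^ 2) < (b 0 * -1 + b 1 * 1 + b 2 * -1 + b 3 * -1 + b 4 * -1 + b 5 * -1) ^ 2
      exact lt_of_lt_of_eq P1 (by ring)
    · apply hmem2
      show (∑ i, (b i) ^ 2) < (b 0 * -1 + b 1 * -1 + b 2 * 1 + b 3 * -1 + b 4 * -1 + b 5 * -1) ^ 2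
      exact lt_of_lt_of_eq P2 (by ring)
    · apply hmem2
      show (∑ i, (b i) ^ 2) < (b 0 * -1 + b 1 * -1 + b 2 * -1 + b 3 * 1 + b 4 * -1 + b 5 * -1) ^ 2
      exact lt_of_lt_of_eq P3 (by ring)
    · apply hmem2
      show (∑ i, (b i) ^ 2) < (b 0 * -1 + b 1 * -1 + b 2 * -1 + b 3 * -1 + b 4 * 1 + b 5 * -1) ^ 2
      exact lt_of_lt_of_eq P4 (by ring)
    · apply hmem2
      show (∑ i, (b i) ^ 2) < (b 0 * -1 + b 1 * -1 + b 2 * -1 + b 3 * -1 + b 4 * -1 + b 5 * 1) ^ 2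
      exact lt_of_lt_of_eq P5 (by ring)
  · push_neg at hc1
    have PB : (∑ i, (b i) ^ 2) < (b 0 + b 1 + b 2 + b 3 - b 4 - b 5)^2 := by
      rw [hσ] at hc1 ⊢
      linarith
    by_cases hc2 : (∑ i, (b i) ^ 2) < (b 0 + b 1 - b 2 + b 3 + b 4 + b 5)^2
    · have P2 := hc2
      refine le_trans (le_of_eq (by decide : ({![true,true,true,true,true,true], ![true,true,false,true,true,true], ![true,true,true,false,true,true], ![true,true,true,true,false,true], ![true,true,true,true,true,false], ![true,true,true,true,false,false], ![false,false,false,false,false,false], ![false,false,true,false,false,false], ![false,false,false,true,false,false], ![false,false,false,false,true,false], ![false,false,false,false,false,true], ![false,false,false,false,true,true]} : Finset (Fin 6 → Bool)).card = 12).symm) (Finset.card_le_card ?_)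
      intro v hv
      simp only [Finset.mem_insert, Finset.mem_singleton] at hv
      rcases hv with rfl | rfl | rfl | rfl | rfl | rfl | rfl | rfl | rfl | rfl | rfl | rfl
      · apply hmem2
        show (∑ i, (b i) ^ 2) < (b 0 * 1 + b 1 * 1 + b 2 * 1 + b 3 * 1 + b 4 * 1 + b 5 * 1) ^ 2
        exact lt_of_lt_of_eq P0 (by ring)
      · apply hmem2
        show (∑ i, (b i) ^ 2) < (b 0 * 1 + b 1 * 1 + b 2 * -1 + b 3 * 1 + b 4 * 1 + b 5 * 1) ^ 2
        exact lt_of_lt_of_eq P2 (by ring)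
      · apply hmem2
        show (∑ i, (b i) ^ 2) < (b 0 * 1 + b 1 * 1 + b 2 * 1 + b 3 * -1 + b 4 * 1 + b 5 * 1) ^ 2
        exact lt_of_lt_of_eq P3 (by ring)
      · apply hmem2
        show (∑ i, (b i) ^ 2) < (b 0 * 1 + b 1 * 1 + b 2 * 1 + b 3 * 1 + b 4 * -1 + b 5 * 1) ^ 2
        exact lt_of_lt_of_eq P4 (by ring)
      · apply hmem2
        show (∑ i, (b i) ^ 2) < (b 0 * 1 + b 1 * 1 + b 2 * 1 + b 3 * 1 + b 4 * 1 + b 5 * -1) ^ 2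
        exact lt_of_lt_of_eq P5 (by ring)
      · apply hmem2
        show (∑ i, (b i) ^ 2) < (b 0 * 1 + b 1 * 1 + b 2 * 1 + b 3 * 1 + b 4 * -1 + b 5 * -1) ^ 2
        exact lt_of_lt_of_eq PB (by ring)
      · apply hmem2
        show (∑ i, (b i) ^ 2) < (b 0 * -1 + b 1 * -1 + b 2 * -1 + b 3 * -1 + b 4 * -1 + b 5 * -1) ^ 2
        exact lt_of_lt_of_eq P0 (by ring)
      · apply hmem2
        show (∑ i, (b i) ^ 2) < (b 0 * -1 + b 1 * -1 + b 2 * 1 + b 3 * -1 + b 4 * -1 + b 5 * -1) ^ 2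
        exact lt_of_lt_of_eq P2 (by ring)
      · apply hmem2
        show (∑ i, (b i) ^ 2) < (b 0 * -1 + b 1 * -1 + b 2 * -1 + b 3 * 1 + b 4 * -1 + b 5 * -1) ^ 2
        exact lt_of_lt_of_eq P3 (by ring)
      · apply hmem2
        show (∑ i, (b i) ^ 2) < (b 0 * -1 + b 1 * -1 + b 2 * -1 + b 3 * -1 + b 4 * 1 + b 5 * -1) ^ 2
        exact lt_of_lt_of_eq P4 (by ring)
      · apply hmem2
        show (∑ i, (b i) ^ 2) < (b 0 * -1 + b 1 * -1 + b 2 * -1 + b 3 * -1 + b 4 * -1 + b 5 * 1) ^ 2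
        exact lt_of_lt_of_eq P5 (by ring)
      · apply hmem2
        show (∑ i, (b i) ^ 2) < (b 0 * -1 + b 1 * -1 + b 2 * -1 + b 3 * -1 + b 4 * 1 + b 5 * 1) ^ 2
        exact lt_of_lt_of_eq PB (by ring)
    · push_neg at hc2
      have PC : (∑ i, (b i) ^ 2) < (b 0 + b 1 + b 2 - b 3 - b 4 + b 5)^2 := by
        rw [hσ] at hc2 ⊢
        linarith
      refine le_trans (le_of_eq (by decide : ({![true,true,true,true,true,true], ![true,true,true,false,true,true], ![true,true,true,true,false,true], ![true,true,true,true,true,false], ![true,true,true,false,false,true], ![true,true,true,true,false,false], ![false,false,false,false,false,false], ![false,false,false,true,false,false], ![false,false,false,false,true,false], ![false,false,false,false,false,true], ![false,false,false,true,true,false], ![false,false,false,false,true,true]} : Finset (Fin 6 → Bool)).card = 12).symm) (Finset.card_le_card ?_)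
      intro v hv
      simp only [Finset.mem_insert, Finset.mem_singleton] at hv
      rcases hv with rfl | rfl | rfl | rfl | rfl | rfl | rfl | rfl | rfl | rfl | rfl | rfl
      · apply hmem2
        show (∑ i, (b i) ^ 2) < (b 0 * 1 + b 1 * 1 + b 2 * 1 + b 3 * 1 + b 4 * 1 + b 5 * 1) ^ 2
        exact lt_of_lt_of_eq P0 (by ring)
      · apply hmem2
        show (∑ i, (b i) ^ 2) < (b 0 * 1 + b 1 * 1 + b 2 * 1 + b 3 * -1 + b 4 * 1 + b 5 * 1) ^ 2
        exact lt_of_lt_of_eq P3 (by ring)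
      · apply hmem2
        show (∑ i, (b i) ^ 2) < (b 0 * 1 + b 1 * 1 + b 2 * 1 + b 3 * 1 + b 4 * -1 + b 5 * 1) ^ 2
        exact lt_of_lt_of_eq P4 (by ring)
      · apply hmem2
        show (∑ i, (b i) ^ 2) < (b 0 * 1 + b 1 * 1 + b 2 * 1 + b 3 * 1 + b 4 * 1 + b 5 * -1) ^ 2
        exact lt_of_lt_of_eq P5 (by ring)
      · apply hmem2
        show (∑ i, (b i) ^ 2) < (b 0 * 1 + b 1 * 1 + b 2 * 1 + b 3 * -1 + b 4 * -1 + b 5 * 1) ^ 2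
        exact lt_of_lt_of_eq PC (by ring)
      · apply hmem2
        show (∑ i, (b i) ^ 2) < (b 0 * 1 + b 1 * 1 + b 2 * 1 + b 3 * 1 + b 4 * -1 + b 5 * -1) ^ 2
        exact lt_of_lt_of_eq PB (by ring)
      · apply hmem2
        show (∑ i, (b i) ^ 2) < (b 0 * -1 + b 1 * -1 + b 2 * -1 + b 3 * -1 + b 4 * -1 + b 5 * -1) ^ 2
        exact lt_of_lt_of_eq P0 (by ring)
      · apply hmem2
        show (∑ i, (b i) ^ 2) < (b 0 * -1 + b 1 * -1 + b 2 * -1 + b 3 * 1 + b 4 * -1 + b 5 * -1) ^ 2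
        exact lt_of_lt_of_eq P3 (by ring)
      · apply hmem2
        show (∑ i, (b i) ^ 2) < (b 0 * -1 + b 1 * -1 + b 2 * -1 + b 3 * -1 + b 4 * 1 + b 5 * -1) ^ 2
        exact lt_of_lt_of_eq P4 (by ring)
      · apply hmem2
        show (∑ i, (b i) ^ 2) < (b 0 * -1 + b 1 * -1 + b 2 * -1 + b 3 * -1 + b 4 * -1 + b 5 * 1) ^ 2
        exact lt_of_lt_of_eq P5 (by ring)
      · apply hmem2
        show (∑ i, (b i) ^ 2) < (b 0 * -1 + b 1 * -1 + b 2 * -1 + b 3 * 1 + b 4 * 1 + b 5 * -1) ^ 2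
        exact lt_of_lt_of_eq PC (by ring)
      · apply hmem2
        show (∑ i, (b i) ^ 2) < (b 0 * -1 + b 1 * -1 + b 2 * -1 + b 3 * -1 + b 4 * 1 + b 5 * 1) ^ 2
        exact lt_of_lt_of_eq PB (by ring)

lemma rsign_not (u : Bool) : rsign (!u) = -rsign u := by cases u <;> simp [rsign]

lemma lower (a : Fin 6 → ℝ) (ha : ∀ i, a i ≠ 0) :
    12 ≤ (Finset.univ.filter fun s : Fin 6 → Bool =>
      |∑ i, a i * rsign (s i)| > Real.sqrt (∑ i, (a i) ^ 2)).card := by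
  set π := Tuple.sort (fun i => -|a i|) with hπ
  set b : Fin 6 → ℝ := fun i => |a (π i)| with hb
  have hpos : ∀ i, 0 < b i := fun i => abs_pos.2 (ha _)
  have hmono : ∀ i j : Fin 6, i ≤ j → b j ≤ b i := by
    intro i j hij
    have := Tuple.monotone_sort (fun i => -|a i|) hij
    simpa [hb] using this
  have hnorm : (∑ i, (b i) ^ 2) = ∑ j, (a j) ^ 2 := by
    calc (∑ i, (b i) ^ 2) = ∑ i, (a (π i)) ^ 2 := by simp [hb, sq_abs]
    _ = ∑ j, (a j) ^ 2 := Equiv.sum_comp π (fun j => (a j) ^ 2)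
  set Φ : (Fin 6 → Bool) → (Fin 6 → Bool) :=
    fun t j => if a j < 0 then !(t (π.symm j)) else t (π.symm j) with hΦ
  have hsum : ∀ t : Fin 6 → Bool, ∑ j, a j * rsign (Φ t j) = ∑ i, b i * rsign (t i) := by
    intro t
    calc ∑ j, a j * rsign (Φ t j) = ∑ j, |a j| * rsign (t (π.symm j)) := by
          refine Finset.sum_congr rfl fun j _ => ?_
          by_cases h : a j < 0
          · rw [hΦ]; simp only [if_pos h, rsign_not, abs_of_neg h]; ring
          · rw [hΦ]; simp only [if_neg h, abs_of_nonneg (not_lt.1 h)]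
    _ = ∑ i, b i * rsign (t i) := by
          rw [← Equiv.sum_comp π (fun j => |a j| * rsign (t (π.symm j)))]
          refine Finset.sum_congr rfl fun i _ => ?_
          simp [hb]
  refine le_trans (core b hpos hmono) (Finset.card_le_card_of_injOn Φ ?_ ?_)
  · intro t ht
    rw [Finset.mem_coe, Finset.mem_filter] at ht ⊢
    refine ⟨Finset.mem_univ _, ?_⟩
    rw [hsum t, ← hnorm]
    exact ht.2
  · intro t _ t' _ h
    funext i
    have := congrFun h (π i)
    by_cases hc : a (π i) < 0 <;> simp [hΦ, hc] at this <;> simpa using this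

def N6 (s : Fin 6 → Bool) : ℤ :=
  (if s 0 then 2 else -2) + (if s 1 then 1 else -1) + (if s 2 then 1 else -1) +
  (if s 3 then 1 else -1) + (if s 4 then 1 else -1) + (if s 5 then 1 else -1)

set_option maxHeartbeats 1000000 in
lemma eqcard :
    (Finset.univ.filter fun s : Fin 6 → Bool =>
      |∑ i, (![2, 1, 1, 1, 1, 1] : Fin 6 → ℝ) i * rsign (s i)|
        > Real.sqrt (∑ i, ((![2, 1, 1, 1, 1, 1] : Fin 6 → ℝ) i) ^ 2)).card = 12 := by
  have hsq : Real.sqrt (∑ i, ((![2, 1, 1, 1, 1, 1] : Fin 6 → ℝ) i) ^ 2) = 3 := by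
    have : (∑ i, ((![2, 1, 1, 1, 1, 1] : Fin 6 → ℝ) i) ^ 2) = 9 := by
      rw [Fin.sum_univ_six]; show (2:ℝ)^2 + 1^2 + 1^2 + 1^2 + 1^2 + 1^2 = 9; norm_num
    rw [this, show (9:ℝ) = 3^2 by norm_num, Real.sqrt_sq (by norm_num : (0:ℝ) ≤ 3)]
  have hiff : ∀ s : Fin 6 → Bool,
      (|∑ i, (![2, 1, 1, 1, 1, 1] : Fin 6 → ℝ) i * rsign (s i)|
        > Real.sqrt (∑ i, ((![2, 1, 1, 1, 1, 1] : Fin 6 → ℝ) i) ^ 2)) ↔ 3 < |N6 s| := by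
    intro s
    rw [hsq]
    have hcast : (∑ i, (![2, 1, 1, 1, 1, 1] : Fin 6 → ℝ) i * rsign (s i)) = (N6 s : ℝ) := by
      rw [Fin.sum_univ_six, N6]
      cases h0 : s 0 <;> cases h1 : s 1 <;> cases h2 : s 2 <;> cases h3 : s 3 <;>
        cases h4 : s 4 <;> cases h5 : s 5 <;> simp [rsign, vec6_five] <;> norm_num
    rw [hcast, ← Int.cast_abs]
    exact_mod_cast Iff.rfl
  rw [Finset.filter_congr (fun s _ => hiff s)]
  rw [Finset.filter_congr_decidable]
  decide

/-- For every `a` in `R^6` with all coordinates nonzero, `P(|a.e| > ||a||) >= 3 / 16`,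
with equality for `a = ![2, 1, 1, 1, 1, 1]`; hence `G_6' = 3 / 16`. -/
theorem stmt_14 :
    (∀ a : Fin 6 → ℝ, (∀ i, a i ≠ 0) →
        prob 6 (fun s => |∑ i, a i * rsign (s i)| > Real.sqrt (∑ i, (a i) ^ 2)) ≥ 3 / 16) ∧
    prob 6 (fun s => |∑ i, (![2, 1, 1, 1, 1, 1] : Fin 6 → ℝ) i * rsign (s i)|
        > Real.sqrt (∑ i, ((![2, 1, 1, 1, 1, 1] : Fin 6 → ℝ) i) ^ 2)) = 3 / 16 ∧
    sInf {p : ℝ | ∃ a : Fin 6 → ℝ, (∀ i, a i ≠ 0) ∧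
        p = prob 6 (fun s => |∑ i, a i * rsign (s i)| > Real.sqrt (∑ i, (a i) ^ 2))}
      = 3 / 16 := by
  have main1 : ∀ a : Fin 6 → ℝ, (∀ i, a i ≠ 0) →
      prob 6 (fun s => |∑ i, a i * rsign (s i)| > Real.sqrt (∑ i, (a i) ^ 2)) ≥ 3 / 16 := by
    intro a ha
    have h12 := lower a ha
    unfold prob
    rw [ge_iff_le, show (3:ℝ)/16 = 12 / 2 ^ 6 by norm_num]
    apply div_le_div_of_nonneg_right ?_ (by positivity)
    exact_mod_cast h12
  have hne : ∀ i : Fin 6, (![2, 1, 1, 1, 1, 1] : Fin 6 → ℝ) i ≠ 0 := by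
    intro i
    fin_cases i <;> norm_num
  have main2 : prob 6 (fun s => |∑ i, (![2, 1, 1, 1, 1, 1] : Fin 6 → ℝ) i * rsign (s i)|
      > Real.sqrt (∑ i, ((![2, 1, 1, 1, 1, 1] : Fin 6 → ℝ) i) ^ 2)) = 3 / 16 := by
    unfold prob
    rw [eqcard]
    norm_num
  refine ⟨main1, main2, ?_⟩
  have hmem : (3:ℝ)/16 ∈ {p : ℝ | ∃ a : Fin 6 → ℝ, (∀ i, a i ≠ 0) ∧
      p = prob 6 (fun s => |∑ i, a i * rsign (s i)| > Real.sqrt (∑ i, (a i) ^ 2))} :=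
    ⟨![2, 1, 1, 1, 1, 1], hne, main2.symm⟩
  have hlb : ∀ p ∈ {p : ℝ | ∃ a : Fin 6 → ℝ, (∀ i, a i ≠ 0) ∧
      p = prob 6 (fun s => |∑ i, a i * rsign (s i)| > Real.sqrt (∑ i, (a i) ^ 2))},
      (3:ℝ)/16 ≤ p := by
    rintro p ⟨a, ha, rfl⟩
    exact main1 a ha
  exact le_antisymm (csInf_le ⟨3/16, hlb⟩ hmem) (le_csInf ⟨_, hmem⟩ hlb)
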